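/- arXiv:math-ph/0610083 — 10 statements merged into one kernel-verified Lean document; each statement's English description precedes it below -/
import Mathlib

section
/- The quantities H1 = (I1·x1² + I2·x2² + I3·x3²)/(1 - α2·α3·x1²) and H2 = (I1²·x1² + I2²·x2² + I3²·x3²)/(1 - α2·α3·x1²) are invariant under the discrete Euler map, i.e., H1(X1,X2,X3) = H1(x1,x2,x3) and H2(X1,X2,X3) = H2(x1,x2,x3). -/
set_option maxHeartbeats 4000000

private lemma euler_key1 (I1 I2 I3 a1 a2 a3 x1 x2 x3 : ℝ)
    (hI1 : I1 ≠ 0) (hI2 : I2 ≠ 0) (hI3 : I3 ≠ 0)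
    (ha1 : a1 = (I2 - I3) / (2 * I1))
    (ha2 : a2 = (I3 - I1) / (2 * I2))
    (ha3 : a3 = (I1 - I2) / (2 * I3)) :
    (1 - 2*a1*a2*a3*x1*x2*x3 - a2*a3*x1^2 - a3*a1*x2^2 - a1*a2*x3^2)^2
      - a2*a3*(x1*(1 - a2*a3*x1^2 + a3*a1*x2^2 + a1*a2*x3^2) + 2*a1*x2*x3)^2
    = (1 - 2*a2*a3*x1^2 - 2*a3*a1*x2^2 - 2*a1*a2*x3^2 - 8*a1*a2*a3*x1*x2*x3
        + a2^2*a3^2*x1^4 + a3^2*a1^2*x2^4 + a1^2*a2^2*x3^4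
        - 2*a1*a2^2*a3*x1^2*x3^2 - 2*a1^2*a2*a3*x2^2*x3^2 - 2*a1*a2*a3^2*x1^2*x2^2)
      * (1 - a2*a3*x1^2) := by
  subst ha1 ha2 ha3
  field_simp
  ring

private lemma euler_key2 (I1 I2 I3 a1 a2 a3 x1 x2 x3 : ℝ)
    (hI1 : I1 ≠ 0) (hI2 : I2 ≠ 0) (hI3 : I3 ≠ 0)
    (ha1 : a1 = (I2 - I3) / (2 * I1))
    (ha2 : a2 = (I3 - I1) / (2 * I2))
    (ha3 : a3 = (I1 - I2) / (2 * I3)) :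
    I1*(x1*(1 - a2*a3*x1^2 + a3*a1*x2^2 + a1*a2*x3^2) + 2*a1*x2*x3)^2
      + I2*(x2*(1 + a2*a3*x1^2 - a3*a1*x2^2 + a1*a2*x3^2) + 2*a2*x3*x1)^2
      + I3*(x3*(1 + a2*a3*x1^2 + a3*a1*x2^2 - a1*a2*x3^2) + 2*a3*x1*x2)^2
    = (1 - 2*a2*a3*x1^2 - 2*a3*a1*x2^2 - 2*a1*a2*x3^2 - 8*a1*a2*a3*x1*x2*x3
        + a2^2*a3^2*x1^4 + a3^2*a1^2*x2^4 + a1^2*a2^2*x3^4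
        - 2*a1*a2^2*a3*x1^2*x3^2 - 2*a1^2*a2*a3*x2^2*x3^2 - 2*a1*a2*a3^2*x1^2*x2^2)
      * (I1*x1^2 + I2*x2^2 + I3*x3^2) := by
  subst ha1 ha2 ha3
  field_simp
  ring

private lemma euler_key3 (I1 I2 I3 a1 a2 a3 x1 x2 x3 : ℝ)
    (hI1 : I1 ≠ 0) (hI2 : I2 ≠ 0) (hI3 : I3 ≠ 0)
    (ha1 : a1 = (I2 - I3) / (2 * I1))
    (ha2 : a2 = (I3 - I1) / (2 * I2))
    (ha3 : a3 = (I1 - I2) / (2 * I3)) :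
    I1^2*(x1*(1 - a2*a3*x1^2 + a3*a1*x2^2 + a1*a2*x3^2) + 2*a1*x2*x3)^2
      + I2^2*(x2*(1 + a2*a3*x1^2 - a3*a1*x2^2 + a1*a2*x3^2) + 2*a2*x3*x1)^2
      + I3^2*(x3*(1 + a2*a3*x1^2 + a3*a1*x2^2 - a1*a2*x3^2) + 2*a3*x1*x2)^2
    = (1 - 2*a2*a3*x1^2 - 2*a3*a1*x2^2 - 2*a1*a2*x3^2 - 8*a1*a2*a3*x1*x2*x3
        + a2^2*a3^2*x1^4 + a3^2*a1^2*x2^4 + a1^2*a2^2*x3^4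
        - 2*a1*a2^2*a3*x1^2*x3^2 - 2*a1^2*a2*a3*x2^2*x3^2 - 2*a1*a2*a3^2*x1^2*x2^2)
      * (I1^2*x1^2 + I2^2*x2^2 + I3^2*x3^2) := by
  subst ha1 ha2 ha3
  field_simp
  ring

/-- H1 and H2 are invariants of the discrete Euler map. -/
theorem euler_top_invariants
    (I1 I2 I3 a1 a2 a3 x1 x2 x3 D X1 X2 X3 : ℝ)
    (hI1 : I1 ≠ 0) (hI2 : I2 ≠ 0) (hI3 : I3 ≠ 0)
    (ha1 : a1 = (I2 - I3) / (2 * I1))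
    (ha2 : a2 = (I3 - I1) / (2 * I2))
    (ha3 : a3 = (I1 - I2) / (2 * I3))
    (hDdef : D = 1 - 2*a1*a2*a3*x1*x2*x3 - a2*a3*x1^2 - a3*a1*x2^2 - a1*a2*x3^2)
    (hD : D ≠ 0)
    (hX1 : X1 = (x1*(1 - a2*a3*x1^2 + a3*a1*x2^2 + a1*a2*x3^2) + 2*a1*x2*x3) / D)
    (hX2 : X2 = (x2*(1 + a2*a3*x1^2 - a3*a1*x2^2 + a1*a2*x3^2) + 2*a2*x3*x1) / D)
    (hX3 : X3 = (x3*(1 + a2*a3*x1^2 + a3*a1*x2^2 - a1*a2*x3^2) + 2*a3*x1*x2) / D)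
    (hden : 1 - a2*a3*x1^2 ≠ 0)
    (hden' : 1 - a2*a3*X1^2 ≠ 0) :
    (I1*X1^2 + I2*X2^2 + I3*X3^2) / (1 - a2*a3*X1^2)
      = (I1*x1^2 + I2*x2^2 + I3*x3^2) / (1 - a2*a3*x1^2) ∧
    (I1^2*X1^2 + I2^2*X2^2 + I3^2*X3^2) / (1 - a2*a3*X1^2)
      = (I1^2*x1^2 + I2^2*x2^2 + I3^2*x3^2) / (1 - a2*a3*x1^2) := by
  have k1 := euler_key1 I1 I2 I3 a1 a2 a3 x1 x2 x3 hI1 hI2 hI3 ha1 ha2 ha3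
  have k2 := euler_key2 I1 I2 I3 a1 a2 a3 x1 x2 x3 hI1 hI2 hI3 ha1 ha2 ha3
  have k3 := euler_key3 I1 I2 I3 a1 a2 a3 x1 x2 x3 hI1 hI2 hI3 ha1 ha2 ha3
  rw [← hDdef] at k1
  set E := (1 - 2*a2*a3*x1^2 - 2*a3*a1*x2^2 - 2*a1*a2*x3^2 - 8*a1*a2*a3*x1*x2*x3
        + a2^2*a3^2*x1^4 + a3^2*a1^2*x2^4 + a1^2*a2^2*x3^4
        - 2*a1*a2^2*a3*x1^2*x3^2 - 2*a1^2*a2*a3*x2^2*x3^2 - 2*a1*a2*a3^2*x1^2*x2^2) with hE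
  have hD2 : D^2 ≠ 0 := pow_ne_zero 2 hD
  have hdenid : (1 - a2*a3*X1^2) * D^2 = E * (1 - a2*a3*x1^2) := by
    rw [hX1, div_pow]
    field_simp
    linear_combination k1
  have hnum1 : (I1*X1^2 + I2*X2^2 + I3*X3^2) * D^2 = E * (I1*x1^2 + I2*x2^2 + I3*x3^2) := by
    rw [hX1, hX2, hX3, div_pow, div_pow, div_pow]
    field_simp
    linear_combination k2
  have hnum2 : (I1^2*X1^2 + I2^2*X2^2 + I3^2*X3^2) * D^2
      = E * (I1^2*x1^2 + I2^2*x2^2 + I3^2*x3^2) := by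
    rw [hX1, hX2, hX3, div_pow, div_pow, div_pow]
    field_simp
    linear_combination k3
  constructor
  · rw [div_eq_div_iff hden' hden]
    apply mul_right_cancel₀ hD2
    linear_combination (1 - a2*a3*x1^2) * hnum1 - (I1*x1^2 + I2*x2^2 + I3*x3^2) * hdenid
  · rw [div_eq_div_iff hden' hden]
    apply mul_right_cancel₀ hD2
    linear_combination (1 - a2*a3*x1^2) * hnum2 - (I1^2*x1^2 + I2^2*x2^2 + I3^2*x3^2) * hdenid
end

section
/- A point (x1,x2,x3) is a fixed point of the discrete Euler map if and only if at least two of the coordinates x1, x2, x3 are zero, provided I1, I2, I3 are pairwise distinct. -/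
/-- Auxiliary lemma: if `a1*x2*x3 + x1 = 0` and `a2*x3*x1 + x2 = 0` and the
denominator is nonzero, then `x1 = x2 = 0`. -/
lemma euler_aux (a1 a2 a3 x1 x2 x3 : ℝ)
    (hD : 1 - 2*a1*a2*a3*x1*x2*x3 - a2*a3*x1^2 - a3*a1*x2^2 - a1*a2*x3^2 ≠ 0)
    (hA : a1*x2*x3 + x1 = 0) (hB : a2*x3*x1 + x2 = 0) : x1 = 0 ∧ x2 = 0 := by
  have h : x2 * (1 - a1*a2*x3^2) = 0 := by linear_combination hB - a2*x3*hA
  rcases mul_eq_zero.mp h with h2 | hf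
  · exact ⟨by linear_combination hA - a1*x3*h2, h2⟩
  · exact absurd (show (1 - 2*a1*a2*a3*x1*x2*x3 - a2*a3*x1^2 - a3*a1*x2^2
        - a1*a2*x3^2 : ℝ) = 0 by
        linear_combination (1 - a1*a3*x2^2)*hf - (a2*a3*(x1 + a1*x2*x3))*hA) hD

/-- fixed points of the discrete Euler map are exactly the points
with at least two coordinates zero (for pairwise distinct moments of inertia). -/
theorem euler_top_fixed_points
    (I1 I2 I3 a1 a2 a3 x1 x2 x3 D X1 X2 X3 : ℝ)
    (hI1 : I1 ≠ 0) (hI2 : I2 ≠ 0) (hI3 : I3 ≠ 0)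
    (h12 : I1 ≠ I2) (h23 : I2 ≠ I3) (h31 : I3 ≠ I1)
    (ha1 : a1 = (I2 - I3) / (2 * I1))
    (ha2 : a2 = (I3 - I1) / (2 * I2))
    (ha3 : a3 = (I1 - I2) / (2 * I3))
    (hDdef : D = 1 - 2*a1*a2*a3*x1*x2*x3 - a2*a3*x1^2 - a3*a1*x2^2 - a1*a2*x3^2)
    (hD : D ≠ 0)
    (hX1 : X1 = (x1*(1 - a2*a3*x1^2 + a3*a1*x2^2 + a1*a2*x3^2) + 2*a1*x2*x3) / D)
    (hX2 : X2 = (x2*(1 + a2*a3*x1^2 - a3*a1*x2^2 + a1*a2*x3^2) + 2*a2*x3*x1) / D)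
    (hX3 : X3 = (x3*(1 + a2*a3*x1^2 + a3*a1*x2^2 - a1*a2*x3^2) + 2*a3*x1*x2) / D) :
    (X1 = x1 ∧ X2 = x2 ∧ X3 = x3) ↔
      ((x2 = 0 ∧ x3 = 0) ∨ (x3 = 0 ∧ x1 = 0) ∨ (x1 = 0 ∧ x2 = 0)) := by
  have ha1' : a1 ≠ 0 := by
    rw [ha1]; exact div_ne_zero (sub_ne_zero.mpr h23) (mul_ne_zero two_ne_zero hI1)
  have ha2' : a2 ≠ 0 := by
    rw [ha2]; exact div_ne_zero (sub_ne_zero.mpr h31) (mul_ne_zero two_ne_zero hI2)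
  have ha3' : a3 ≠ 0 := by
    rw [ha3]; exact div_ne_zero (sub_ne_zero.mpr h12) (mul_ne_zero two_ne_zero hI3)
  subst hDdef hX1 hX2 hX3
  constructor
  · rintro ⟨e1, e2, e3⟩
    rw [div_eq_iff hD] at e1 e2 e3
    have p1 : (a3*x1*x2 + x3) * (a2*x3*x1 + x2) = 0 := by
      have q : a1 * ((a3*x1*x2 + x3) * (a2*x3*x1 + x2)) = 0 := by
        linear_combination (1/2 : ℝ) * e1
      exact (mul_eq_zero.mp q).resolve_left ha1'
    have p2 : (a1*x2*x3 + x1) * (a3*x1*x2 + x3) = 0 := by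
      have q : a2 * ((a1*x2*x3 + x1) * (a3*x1*x2 + x3)) = 0 := by
        linear_combination (1/2 : ℝ) * e2
      exact (mul_eq_zero.mp q).resolve_left ha2'
    rcases mul_eq_zero.mp p1 with hC | hB
    · rcases mul_eq_zero.mp p2 with hA | hC'
      · -- A = 0, C = 0 : get x3 = 0 ∧ x1 = 0
        refine Or.inr (Or.inl ?_)
        exact euler_aux a3 a1 a2 x3 x1 x2
          (fun h => hD (by linear_combination h)) hC hA
      · -- C = 0 twice plus p3 needed; use p3
        have p3 : (a2*x3*x1 + x2) * (a1*x2*x3 + x1) = 0 := by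
          have q : a3 * ((a2*x3*x1 + x2) * (a1*x2*x3 + x1)) = 0 := by
            linear_combination (1/2 : ℝ) * e3
          exact (mul_eq_zero.mp q).resolve_left ha3'
        rcases mul_eq_zero.mp p3 with hB | hA
        · -- B = 0, C = 0 : x2 = 0 ∧ x3 = 0
          refine Or.inl ?_
          exact euler_aux a2 a3 a1 x2 x3 x1
            (fun h => hD (by linear_combination h)) hB hC
        · -- A = 0, C = 0
          refine Or.inr (Or.inl ?_)
          exact euler_aux a3 a1 a2 x3 x1 x2
            (fun h => hD (by linear_combination h)) hC hA
    · rcases mul_eq_zero.mp p2 with hA | hC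
      · -- A = 0, B = 0 : x1 = 0 ∧ x2 = 0
        refine Or.inr (Or.inr ?_)
        exact euler_aux a1 a2 a3 x1 x2 x3 hD hA hB
      · -- B = 0, C = 0
        refine Or.inl ?_
        exact euler_aux a2 a3 a1 x2 x3 x1
          (fun h => hD (by linear_combination h)) hB hC
  · rintro (⟨h2, h3⟩ | ⟨h3, h1⟩ | ⟨h1, h2⟩) <;>
      subst_vars <;>
      refine ⟨?_, ?_, ?_⟩ <;>
      rw [div_eq_iff hD] <;> ring
end

section
/- If I2 = I3 (axially symmetric top), the discrete Euler map takes the form X1 = x1, X2 = x2·cos Ω + x3·sin Ω, X3 = x3·cos Ω - x2·sin Ω, where cos Ω = (4I2² - (I2-I1)²x1²)/(4I2² + (I2-I1)²x1²) and sin Ω = 4I2(I2-I1)x1/(4I2² + (I2-I1)²x1²). -/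
/-- for an axially symmetric top (I2 = I3) the discrete Euler map
is a rotation in the (x2,x3)-plane fixing x1. -/
theorem euler_top_axially_symmetric
    (I1 I2 I3 a1 a2 a3 x1 x2 x3 D X1 X2 X3 : ℝ)
    (hI1 : I1 ≠ 0) (hI2 : I2 ≠ 0) (hsym : I3 = I2) (h12 : I1 ≠ I2)
    (ha1 : a1 = (I2 - I3) / (2 * I1))
    (ha2 : a2 = (I3 - I1) / (2 * I2))
    (ha3 : a3 = (I1 - I2) / (2 * I3))
    (hDdef : D = 1 - 2*a1*a2*a3*x1*x2*x3 - a2*a3*x1^2 - a3*a1*x2^2 - a1*a2*x3^2)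
    (hD : D ≠ 0)
    (hX1 : X1 = (x1*(1 - a2*a3*x1^2 + a3*a1*x2^2 + a1*a2*x3^2) + 2*a1*x2*x3) / D)
    (hX2 : X2 = (x2*(1 + a2*a3*x1^2 - a3*a1*x2^2 + a1*a2*x3^2) + 2*a2*x3*x1) / D)
    (hX3 : X3 = (x3*(1 + a2*a3*x1^2 + a3*a1*x2^2 - a1*a2*x3^2) + 2*a3*x1*x2) / D) :
    X1 = x1 ∧
    X2 = x2 * ((4*I2^2 - (I2 - I1)^2*x1^2) / (4*I2^2 + (I2 - I1)^2*x1^2))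
       + x3 * (4*I2*(I2 - I1)*x1 / (4*I2^2 + (I2 - I1)^2*x1^2)) ∧
    X3 = x3 * ((4*I2^2 - (I2 - I1)^2*x1^2) / (4*I2^2 + (I2 - I1)^2*x1^2))
       - x2 * (4*I2*(I2 - I1)*x1 / (4*I2^2 + (I2 - I1)^2*x1^2)) := by
  subst hsym
  have ha1' : a1 = 0 := by simp [ha1]
  subst ha1' ha2 ha3
  have hQ : (4*I3^2 + (I3 - I1)^2*x1^2) ≠ 0 := by positivity
  have hDval : D = (4*I3^2 + (I3 - I1)^2*x1^2) / (4*I3^2) := by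
    rw [hDdef]; field_simp; ring
  have hI3sq : (4:ℝ)*I3^2 ≠ 0 := by positivity
  have hD4 : D * (4*I3^2) = 4*I3^2 + (I3 - I1)^2*x1^2 := by
    rw [hDval]; field_simp
  subst hX1 hX2 hX3
  rw [hDval] at hD ⊢
  have hsub : I3 - I1 ≠ 0 := sub_ne_zero.mpr (Ne.symm h12)
  refine ⟨?_, ?_, ?_⟩ <;> · field_simp; ring
end

section
/- For the axially symmetric discrete Euler top (I2 = I3), the n-th iterate of the map is X1⁽ⁿ⁾ = x1, X2⁽ⁿ⁾ = x2·cos(nΩ) + x3·sin(nΩ), X3⁽ⁿ⁾ = x3·cos(nΩ) - x2·sin(nΩ), where cos Ω = (4I2² - (I2-I1)²x1²)/(4I2² + (I2-I1)²x1²), sin Ω = 4I2(I2-I1)x1/(4I2² + (I2-I1)²x1²). -/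
/-- The axially symmetric discrete Euler map: `x1` is fixed and `(x2,x3)` is
rotated by the angle `-Ω` determined by `x1`. -/
noncomputable def axialEulerMap (I1 I2 : ℝ) (p : ℝ × ℝ × ℝ) : ℝ × ℝ × ℝ :=
  let c : ℝ := (4*I2^2 - (I2 - I1)^2*p.1^2) / (4*I2^2 + (I2 - I1)^2*p.1^2)
  let s : ℝ := 4*I2*(I2 - I1)*p.1 / (4*I2^2 + (I2 - I1)^2*p.1^2)
  (p.1, p.2.1 * c + p.2.2 * s, p.2.2 * c - p.2.1 * s)

/-- the n-th iterate of the axially symmetric discrete Euler map. -/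
theorem axial_euler_top_iterate
    (I1 I2 : ℝ) (hI1 : I1 ≠ 0) (hI2 : I2 ≠ 0) (h12 : I1 ≠ I2)
    (x1 x2 x3 Ω : ℝ)
    (hcos : Real.cos Ω = (4*I2^2 - (I2 - I1)^2*x1^2) / (4*I2^2 + (I2 - I1)^2*x1^2))
    (hsin : Real.sin Ω = 4*I2*(I2 - I1)*x1 / (4*I2^2 + (I2 - I1)^2*x1^2))
    (n : ℕ) :
    (axialEulerMap I1 I2)^[n] (x1, x2, x3) =
      (x1, x2 * Real.cos (n * Ω) + x3 * Real.sin (n * Ω),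
           x3 * Real.cos (n * Ω) - x2 * Real.sin (n * Ω)) := by
  induction n with
  | zero => simp
  | succ n ih =>
    rw [Function.iterate_succ_apply', ih]
    simp only [axialEulerMap, ← hcos, ← hsin, Nat.cast_succ]
    have hc := Real.cos_add (n * Ω) Ω
    have hs := Real.sin_add (n * Ω) Ω
    refine Prod.ext rfl (Prod.ext ?_ ?_) <;> simp <;>
      rw [show ((n:ℝ)+1)*Ω = (n:ℝ)*Ω + Ω by ring, hc, hs] <;> ring
end

section
/- For the axially symmetric discrete Euler top (I2 = I3), a point (x1,x2,x3) with (x2,x3) ≠ (0,0) has exact period n = 3 if and only if x1² = 3·(2I2/(I2-I1))², i.e., x1 = ±√3·2I2/(I2-I1). -/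
/-- A rotation with parameters `(C, S)` fixes a nonzero vector iff `C = 1 ∧ S = 0`. -/
lemma rot_fix (C S a b : ℝ) (hab : a^2 + b^2 ≠ 0) :
    (a*C + b*S = a ∧ b*C - a*S = b) ↔ (C = 1 ∧ S = 0) := by
  constructor
  · rintro ⟨e1, e2⟩
    have h1 : (C - 1) * (a^2 + b^2) = a*(a*C + b*S - a) + b*(b*C - a*S - b) := by ring
    have h2 : S * (a^2 + b^2) = b*(a*C + b*S - a) - a*(b*C - a*S - b) := by ring
    rw [e1, e2] at h1 h2
    simp at h1 h2
    constructor
    · rcases h1 with h | h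
      · linarith
      · exact absurd h hab
    · rcases h2 with h | h
      · exact h
      · exact absurd h hab
  · rintro ⟨hC, hS⟩
    subst hC; subst hS; constructor <;> ring

/-- exact period 3 iff `x1² = 3 (2 I2 / (I2 - I1))²`. -/
theorem axial_euler_top_period_three
    (I1 I2 : ℝ) (hI1 : I1 ≠ 0) (hI2 : I2 ≠ 0) (h12 : I1 ≠ I2)
    (x1 x2 x3 : ℝ) (hx : (x2, x3) ≠ (0, 0)) :
    Function.minimalPeriod (axialEulerMap I1 I2) (x1, x2, x3) = 3
      ↔ x1^2 = 3 * (2 * I2 / (I2 - I1))^2 := by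
  have hdne : I2 - I1 ≠ 0 := sub_ne_zero.mpr (Ne.symm h12)
  set d : ℝ := I2 - I1 with hd
  set D : ℝ := 4*I2^2 + d^2*x1^2 with hDdef
  have hD : 0 < D := by positivity
  set c : ℝ := (4*I2^2 - d^2*x1^2) / D with hcdef
  set s : ℝ := 4*I2*d*x1 / D with hsdef
  have hcs : c^2 + s^2 = 1 := by
    rw [hcdef, hsdef]
    field_simp
    ring
  have hab : x2^2 + x3^2 ≠ 0 := by
    intro h
    apply hx
    have h2 : x2 = 0 := by nlinarith [sq_nonneg x2, sq_nonneg x3]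
    have h3 : x3 = 0 := by nlinarith [sq_nonneg x2, sq_nonneg x3]
    simp [h2, h3]
  have hstep : ∀ a b : ℝ, axialEulerMap I1 I2 (x1, a, b) = (x1, a*c + b*s, b*c - a*s) := by
    intro a b
    simp only [axialEulerMap, hcdef, hsdef, hDdef, hd]
  -- third iterate
  have h3it : (axialEulerMap I1 I2)^[3] (x1, x2, x3) =
      (x1, x2*(c*(c^2 - 3*s^2)) + x3*(s*(3*c^2 - s^2)),
        x3*(c*(c^2 - 3*s^2)) - x2*(s*(3*c^2 - s^2))) := by
    show axialEulerMap I1 I2 (axialEulerMap I1 I2 (axialEulerMap I1 I2 (x1, x2, x3))) = _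
    rw [hstep, hstep, hstep]
    refine Prod.ext rfl (Prod.ext ?_ ?_) <;> simp <;> ring
  have h1it : (axialEulerMap I1 I2) (x1, x2, x3) = (x1, x2*c + x3*s, x3*c - x2*s) := hstep x2 x3
  constructor
  · intro h
    have hp3 : (axialEulerMap I1 I2)^[3] (x1, x2, x3) = (x1, x2, x3) := by
      have := Function.isPeriodicPt_minimalPeriod (axialEulerMap I1 I2) (x1, x2, x3)
      rw [h] at this
      exact this
    have hne : axialEulerMap I1 I2 (x1, x2, x3) ≠ (x1, x2, x3) := by
      intro hfp
      have h1 : Function.minimalPeriod (axialEulerMap I1 I2) (x1, x2, x3) = 1 :=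
        (Function.minimalPeriod_eq_one_iff_isFixedPt).mpr hfp
      omega
    rw [h3it] at hp3
    have heq : x2*(c*(c^2 - 3*s^2)) + x3*(s*(3*c^2 - s^2)) = x2 ∧
        x3*(c*(c^2 - 3*s^2)) - x2*(s*(3*c^2 - s^2)) = x3 := by
      constructor
      · exact congrArg (fun p => p.2.1) hp3
      · exact congrArg (fun p => p.2.2) hp3
    obtain ⟨hC3, hS3⟩ := (rot_fix _ _ x2 x3 hab).mp heq
    -- not a fixed point: c ≠ 1
    have hcne : c ≠ 1 := by
      intro hc1
      have hs0 : s = 0 := by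
        have hs2 : s^2 = 0 := by rw [hc1] at hcs; linarith
        exact pow_eq_zero_iff (n := 2) (by norm_num) |>.mp hs2
      apply hne
      rw [h1it, hc1, hs0]
      simp
    -- deduce c = -1/2
    have hc : c = -1/2 := by
      have hS3' : s * (4*c^2 - 1) = 0 := by linear_combination hS3 + s * hcs
      rcases mul_eq_zero.mp hS3' with hs0 | h4c
      · -- s = 0, so c = ±1, both contradict hC3 given c ≠ 1
        have hcc : c^2 = 1 := by rw [hs0] at hcs; linarith
        have : (c - 1) * (c + 1) = 0 := by linear_combination hcc
        rcases mul_eq_zero.mp this with h | h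
        · exact absurd (by linarith) hcne
        · -- c = -1
          have hcm : c = -1 := by linarith
          exfalso
          rw [hcm, hs0] at hC3
          norm_num at hC3
      · -- 4c² = 1
        have hc2 : c^2 = 1/4 := by linarith
        have hs2 : s^2 = 3/4 := by linarith
        -- hC3 : c*(c^2 - 3*s^2) = 1, so c*(1/4 - 9/4) = 1, -2c = 1
        rw [hc2, hs2] at hC3
        linarith [hC3]
    -- convert to x1²
    have hkey : d^2 * x1^2 = 12 * I2^2 := by
      rw [hcdef] at hc
      field_simp at hc
      linarith
    field_simp
    linear_combination hkey
  · intro h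
    have hkey : d^2 * x1^2 = 12 * I2^2 := by
      field_simp at h
      linear_combination h
    have hDval : D = 16 * I2^2 := by rw [hDdef]; linarith
    have hcD : c * D = 4*I2^2 - d^2*x1^2 := by
      rw [hcdef]; field_simp
    have hI2sq : (0:ℝ) < I2^2 := by positivity
    have hc : c = -1/2 := by
      rw [hDval] at hcD
      nlinarith [hcD, hkey, hI2sq]
    have hs2 : s^2 = 3/4 := by rw [hc] at hcs; norm_num at hcs; linarith
    have hp3 : (axialEulerMap I1 I2)^[3] (x1, x2, x3) = (x1, x2, x3) := by
      rw [h3it]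
      have hC3 : c*(c^2 - 3*s^2) = 1 := by rw [hc, hs2]; norm_num
      have hS3 : s*(3*c^2 - s^2) = 0 := by
        have : 3*c^2 - s^2 = 0 := by rw [hc, hs2]; norm_num
        rw [this, mul_zero]
      rw [hC3, hS3]
      simp
    have hne : axialEulerMap I1 I2 (x1, x2, x3) ≠ (x1, x2, x3) := by
      intro hfp
      rw [h1it] at hfp
      have heq : x2*c + x3*s = x2 ∧ x3*c - x2*s = x3 := by
        constructor
        · exact congrArg (fun p => p.2.1) hfp
        · exact congrArg (fun p => p.2.2) hfp
      obtain ⟨hc1, _⟩ := (rot_fix c s x2 x3 hab).mp heq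
      rw [hc] at hc1
      norm_num at hc1
    have hper : Function.IsPeriodicPt (axialEulerMap I1 I2) 3 (x1, x2, x3) := hp3
    have hdvd := hper.minimalPeriod_dvd
    have hpos := hper.minimalPeriod_pos (by norm_num)
    have hne1 : Function.minimalPeriod (axialEulerMap I1 I2) (x1, x2, x3) ≠ 1 := by
      intro h1
      exact hne ((Function.minimalPeriod_eq_one_iff_isFixedPt).mp h1)
    rcases (Nat.prime_three.eq_one_or_self_of_dvd _ hdvd) with h1 | h3
    · exact absurd h1 hne1
    · exact h3
end

section
/- For the axially symmetric discrete Euler top (I2 = I3), a point (x1,x2,x3) with (x2,x3) ≠ (0,0) has exact period 4 if and only if x1 = ±2I2/(I2-I1) (equivalently x1² = (2I2/(I2-I1))², so μ4 = 1). -/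
/-! Identify `(x2, x3)` with `z = x2 + x3 i`. The map fixes `x1` and multiplies `z` by the unit
complex number `w = cos Ω - i sin Ω`, so for `z ≠ 0` the minimal period is the order of `w`.
That order is `4` exactly when `w ^ 2 = -1`, i.e. when `cos Ω = 0`,
i.e. `(I2 - I1)² x1² = 4 I2²`. -/

open Function Complex

theorem Function.Semiconj.minimalPeriod_apply_eq {α β : Type*} {g : α → β} {fa : α → α}
    {fb : β → β} (h : Semiconj g fa fb) (hg : Injective g) (x : α) :
    minimalPeriod fb (g x) = minimalPeriod fa x :=
  minimalPeriod_eq_minimalPeriod_iff.2 fun n => by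
    simp only [IsPeriodicPt, IsFixedPt, ← (h.iterate_right n).eq, hg.eq_iff]

theorem minimalPeriod_mul_left_eq_orderOf {M : Type*} [MonoidWithZero M]
    [IsRightCancelMulZero M] (w : M) {z : M} (hz : z ≠ 0) :
    minimalPeriod (w * ·) z = orderOf w :=
  minimalPeriod_eq_minimalPeriod_iff.2 fun n => by
    rw [isPeriodicPt_mul_iff_pow_eq_one, IsPeriodicPt, IsFixedPt, mul_left_iterate,
      mul_eq_right₀ hz]

theorem orderOf_eq_four_iff {R : Type*} [Ring R] [NoZeroDivisors R] [NeZero (2 : R)] {w : R} :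
    orderOf w = 4 ↔ w ^ 2 = -1 := by
  constructor
  · intro h
    have h4 : w ^ 2 * w ^ 2 = 1 := by
      rw [← pow_add, show 2 + 2 = orderOf w from h.symm, pow_orderOf_eq_one]
    refine (mul_self_eq_one_iff.1 h4).resolve_left fun h2 => ?_
    have := orderOf_le_of_pow_eq_one two_pos h2
    omega
  · intro h
    refine orderOf_eq_prime_pow (p := 2) (n := 1) ?_ ?_
    · rw [pow_one, h]
      exact fun h1 => two_ne_zero (one_add_one_eq_two.symm.trans (neg_eq_iff_add_eq_zero.1 h1))
    · rw [show 2 ^ (1 + 1) = 2 + 2 from rfl, pow_add, h, neg_mul_neg, one_mul]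

theorem Complex.sq_eq_neg_one_iff_re_eq_zero {w : ℂ} (hw : normSq w = 1) :
    w ^ 2 = -1 ↔ w.re = 0 := by
  rw [normSq_apply] at hw
  rw [Complex.ext_iff, sq, mul_re, mul_im, neg_re, neg_im, one_re, one_im]
  constructor
  · rintro ⟨hre, -⟩
    exact mul_self_eq_zero.1 (by linarith)
  · intro h0
    rw [h0] at hw ⊢
    constructor <;> linarith

/-- `cos Ω - i sin Ω`. -/
noncomputable def axialEulerRotation (I1 I2 x1 : ℝ) : ℂ :=
  ⟨(4*I2^2 - (I2 - I1)^2*x1^2) / (4*I2^2 + (I2 - I1)^2*x1^2),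
    -(4*I2*(I2 - I1)*x1 / (4*I2^2 + (I2 - I1)^2*x1^2))⟩

section

variable {I1 I2 : ℝ} (x1 : ℝ)

theorem semiconj_axialEulerMap :
    Semiconj (fun z : ℂ => (x1, z.re, z.im)) (axialEulerRotation I1 I2 x1 * ·)
      (axialEulerMap I1 I2) := fun z => by
  simp only [axialEulerMap, axialEulerRotation, mul_re, mul_im, Prod.mk.injEq, true_and]
  constructor <;> ring

theorem minimalPeriod_axialEulerMap {x2 x3 : ℝ} (hx : (x2, x3) ≠ (0, 0)) :
    minimalPeriod (axialEulerMap I1 I2) (x1, x2, x3) = orderOf (axialEulerRotation I1 I2 x1) := by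
  have hz : (⟨x2, x3⟩ : ℂ) ≠ 0 := fun h => hx (by simpa [Complex.ext_iff] using h)
  have hinj : Injective fun z : ℂ => (x1, z.re, z.im) := fun z w h => by
    simp only [Prod.mk.injEq, true_and] at h
    exact Complex.ext h.1 h.2
  rw [← minimalPeriod_mul_left_eq_orderOf _ hz]
  exact (semiconj_axialEulerMap x1).minimalPeriod_apply_eq hinj ⟨x2, x3⟩

theorem normSq_axialEulerRotation (hI2 : I2 ≠ 0) : normSq (axialEulerRotation I1 I2 x1) = 1 := by
  have hD : 4*I2^2 + (I2 - I1)^2*x1^2 ≠ 0 := by positivity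
  rw [normSq_apply, axialEulerRotation]
  field_simp
  ring

theorem axialEulerRotation_re_eq_zero_iff (hI2 : I2 ≠ 0) (h12 : I1 ≠ I2) :
    (axialEulerRotation I1 I2 x1).re = 0 ↔
      x1 = 2 * I2 / (I2 - I1) ∨ x1 = -(2 * I2 / (I2 - I1)) := by
  have hD : 4*I2^2 + (I2 - I1)^2*x1^2 ≠ 0 := by positivity
  have hk : I2 - I1 ≠ 0 := sub_ne_zero.2 h12.symm
  rw [axialEulerRotation, div_eq_zero_iff, or_iff_left hD, sub_eq_zero, eq_div_iff hk, ← neg_div,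
    eq_div_iff hk, ← sq_eq_sq_iff_eq_or_eq_neg]
  constructor <;> intro h <;> linarith

end

theorem axial_euler_top_period_four_general
    (I1 I2 : ℝ) (hI2 : I2 ≠ 0) (h12 : I1 ≠ I2)
    (x1 x2 x3 : ℝ) (hx : (x2, x3) ≠ (0, 0)) :
    Function.minimalPeriod (axialEulerMap I1 I2) (x1, x2, x3) = 4
      ↔ (x1 = 2 * I2 / (I2 - I1) ∨ x1 = -(2 * I2 / (I2 - I1))) := by
  rw [minimalPeriod_axialEulerMap x1 hx, orderOf_eq_four_iff,
    sq_eq_neg_one_iff_re_eq_zero (normSq_axialEulerRotation x1 hI2),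
    axialEulerRotation_re_eq_zero_iff x1 hI2 h12]

/-- exact period 4 iff `x1 = ± 2 I2 / (I2 - I1)`. -/
theorem axial_euler_top_period_four
    (I1 I2 : ℝ) (hI1 : I1 ≠ 0) (hI2 : I2 ≠ 0) (h12 : I1 ≠ I2)
    (x1 x2 x3 : ℝ) (hx : (x2, x3) ≠ (0, 0)) :
    Function.minimalPeriod (axialEulerMap I1 I2) (x1, x2, x3) = 4
      ↔ (x1 = 2 * I2 / (I2 - I1) ∨ x1 = -(2 * I2 / (I2 - I1))) :=
  axial_euler_top_period_four_general I1 I2 hI2 h12 x1 x2 x3 hx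
end

section
/- For the axially symmetric discrete Euler top (I2 = I3), the periodicity condition x1² = μ_n²·4I2²/(I1-I2)² is equivalent to the relation I2·H1 - H2 = (μ_n²/(1+μ_n²))·4I1I2²/(I2-I1) among the invariants H1 = (I1x1² + I2x2² + I2x3²)/(1 - α2α3x1²) and H2 = (I1²x1² + I2²x2² + I2²x3²)/(1 - α2α3x1²), where α2α3 = -(I1-I2)²/(4I2²). -/
/-! For `I2 = I3` the `x2`, `x3` terms cancel in `I2 H1 - H2`, leaving
`I1 (I2 - I1) · t / (1 + k t)` with `t = x1²` and `k = (I1 - I2)²/(4 I2²) = -α2α3`.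
The right-hand side is the same expression at `t = μ² / k`, and the Möbius map
`t ↦ t / (1 + k t)` is injective, so the relation holds exactly when `x1² = μ² / k`. -/

theorem div_one_add_mul_eq_div_one_add_mul_iff {K : Type*} [Field K] {k t s : K}
    (ht : 1 + k * t ≠ 0) (hs : 1 + k * s ≠ 0) :
    t / (1 + k * t) = s / (1 + k * s) ↔ t = s := by
  rw [div_eq_div_iff ht hs]
  constructor
  · intro h
    linear_combination h
  · rintro rfl
    rfl

/-- The constant `-α2α3` of the axially symmetric top. -/
noncomputable def axialCoupling (I1 I2 : ℝ) : ℝ := (I1 - I2) ^ 2 / (4 * I2 ^ 2)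

theorem axialCoupling_nonneg (I1 I2 : ℝ) : 0 ≤ axialCoupling I1 I2 := by
  unfold axialCoupling
  positivity

theorem axial_invariant_combination (I1 I2 a b c : ℝ) :
    I2 * ((I1 * a + I2 * b + I2 * c) / (1 + (I1 - I2) ^ 2 * a / (4 * I2 ^ 2)))
        - (I1 ^ 2 * a + I2 ^ 2 * b + I2 ^ 2 * c) / (1 + (I1 - I2) ^ 2 * a / (4 * I2 ^ 2)) =
      I1 * (I2 - I1) * (a / (1 + axialCoupling I1 I2 * a)) := by
  unfold axialCoupling
  ring

theorem axialCoupling_mul_periodic_value {I1 I2 : ℝ} (hI2 : I2 ≠ 0) (h12 : I1 ≠ I2) (μ : ℝ) :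
    axialCoupling I1 I2 * (μ ^ 2 * (4 * I2 ^ 2) / (I1 - I2) ^ 2) = μ ^ 2 := by
  have hsub : I1 - I2 ≠ 0 := sub_ne_zero.mpr h12
  unfold axialCoupling
  field_simp

theorem periodic_relation_value {I1 I2 : ℝ} (hI2 : I2 ≠ 0) (h12 : I1 ≠ I2) (μ : ℝ) :
    μ ^ 2 / (1 + μ ^ 2) * (4 * I1 * I2 ^ 2) / (I2 - I1) =
      I1 * (I2 - I1) * (μ ^ 2 * (4 * I2 ^ 2) / (I1 - I2) ^ 2 /
        (1 + axialCoupling I1 I2 * (μ ^ 2 * (4 * I2 ^ 2) / (I1 - I2) ^ 2))) := by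
  have hsub : I2 - I1 ≠ 0 := sub_ne_zero.mpr h12.symm
  rw [axialCoupling_mul_periodic_value hI2 h12]
  field_simp
  ring

theorem axial_euler_top_invariant_relation_general
    (I1 I2 : ℝ) (hI1 : I1 ≠ 0) (hI2 : I2 ≠ 0) (h12 : I1 ≠ I2)
    (x1 x2 x3 : ℝ) (μ H1 H2 : ℝ)
    (hH1 : H1 = (I1*x1^2 + I2*x2^2 + I2*x3^2) / (1 + (I1 - I2)^2*x1^2/(4*I2^2)))
    (hH2 : H2 = (I1^2*x1^2 + I2^2*x2^2 + I2^2*x3^2) / (1 + (I1 - I2)^2*x1^2/(4*I2^2))) :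
    x1^2 = μ^2 * (4*I2^2) / (I1 - I2)^2 ↔
      I2*H1 - H2 = (μ^2 / (1 + μ^2)) * (4*I1*I2^2) / (I2 - I1) := by
  have hfactor : I1 * (I2 - I1) ≠ 0 := mul_ne_zero hI1 (sub_ne_zero.mpr h12.symm)
  have hk := axialCoupling_nonneg I1 I2
  rw [hH1, hH2, axial_invariant_combination, periodic_relation_value hI2 h12,
    mul_right_inj' hfactor, div_one_add_mul_eq_div_one_add_mul_iff (by positivity)
      (by rw [axialCoupling_mul_periodic_value hI2 h12]; positivity)]

/-- for the axially symmetric top, the periodicity condition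
`x1² = μ_n² 4I2²/(I1-I2)²` is equivalent to the relation
`I2 H1 - H2 = (μ_n²/(1+μ_n²)) 4 I1 I2²/(I2-I1)` among the invariants. -/
theorem axial_euler_top_invariant_relation
    (I1 I2 : ℝ) (hI1 : I1 ≠ 0) (hI2 : I2 ≠ 0) (h12 : I1 ≠ I2)
    (x1 x2 x3 : ℝ) (n : ℕ) (hn : 3 ≤ n) (μ H1 H2 : ℝ)
    (hμ : μ = Real.sqrt ((1 - Real.cos (2 * Real.pi / n)) / (1 + Real.cos (2 * Real.pi / n))))
    (hH1 : H1 = (I1*x1^2 + I2*x2^2 + I2*x3^2) / (1 + (I1 - I2)^2*x1^2/(4*I2^2)))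
    (hH2 : H2 = (I1^2*x1^2 + I2^2*x2^2 + I2^2*x3^2) / (1 + (I1 - I2)^2*x1^2/(4*I2^2))) :
    x1^2 = μ^2 * (4*I2^2) / (I1 - I2)^2 ↔
      I2*H1 - H2 = (μ^2 / (1 + μ^2)) * (4*I1*I2^2) / (I2 - I1) :=
  axial_euler_top_invariant_relation_general I1 I2 hI1 hI2 h12 x1 x2 x3 μ H1 H2 hH1 hH2
end

section
/- Substituting H1 = (I1x1²+I2x2²+I3x3²)/(1-α2α3x1²) and H2 = (I1²x1²+I2²x2²+I3²x3²)/(1-α2α3x1²) into the expression A1² + 2A0(A2 - A3) - 3A0², the condition A1² + 2A0(A2-A3) - 3A0² = 0 is equivalent to (1+ξ1+ξ2+ξ3)² - 4(1 + ξ1ξ2 + ξ2ξ3 + ξ3ξ1) = 0, where ξ1 = (I3-I1)(I1-I2)x1²/(4I2I3), ξ2 = (I1-I2)(I2-I3)x2²/(4I3I1), ξ3 = (I2-I3)(I3-I1)x3²/(4I1I2). -/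
set_option maxHeartbeats 1000000 in
/-- after substituting the invariants, the condition
`A1² + 2A0(A2 - A3) - 3A0² = 0` becomes the quartic condition in the ξ's. -/
theorem euler_top_period3_condition
    (I1 I2 I3 x1 x2 x3 : ℝ)
    (hI1 : I1 ≠ 0) (hI2 : I2 ≠ 0) (hI3 : I3 ≠ 0)
    (h12 : I1 ≠ I2) (h23 : I2 ≠ I3) (h31 : I3 ≠ I1)
    (a2 a3 H1 H2 A0 A1 A2 A3 ξ1 ξ2 ξ3 : ℝ)
    (ha2 : a2 = (I3 - I1) / (2 * I2))
    (ha3 : a3 = (I1 - I2) / (2 * I3))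
    (hden : 1 - a2*a3*x1^2 ≠ 0)
    (hH1 : H1 = (I1*x1^2 + I2*x2^2 + I3*x3^2) / (1 - a2*a3*x1^2))
    (hH2 : H2 = (I1^2*x1^2 + I2^2*x2^2 + I3^2*x3^2) / (1 - a2*a3*x1^2))
    (hA0 : A0 = 4*I1*I2*I3)
    (hA1 : A1 = (I2 - I3) * (I1*H1 - H2))
    (hA2 : A2 = (I3 - I1) * (I2*H1 - H2))
    (hA3 : A3 = (I1 - I2) * (I3*H1 - H2))
    (hξ1 : ξ1 = (I3 - I1)*(I1 - I2)*x1^2 / (4*I2*I3))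
    (hξ2 : ξ2 = (I1 - I2)*(I2 - I3)*x2^2 / (4*I3*I1))
    (hξ3 : ξ3 = (I2 - I3)*(I3 - I1)*x3^2 / (4*I1*I2)) :
    A1^2 + 2*A0*(A2 - A3) - 3*A0^2 = 0 ↔
      (1 + ξ1 + ξ2 + ξ3)^2 - 4*(1 + ξ1*ξ2 + ξ2*ξ3 + ξ3*ξ1) = 0 := by
  set E : ℝ := 4*I2*I3 - (I3 - I1)*(I1 - I2)*x1^2 with hEdef
  have hd : 1 - a2*a3*x1^2 = E / (4*I2*I3) := by
    rw [ha2, ha3, hEdef]; field_simp; ring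
  have hE : E ≠ 0 := by
    intro h
    apply hden
    rw [hd, h, zero_div]
  have h4 : (4:ℝ)*I2*I3 ≠ 0 := by positivity
  have h1 : H1 * E = 4*I2*I3*(I1*x1^2 + I2*x2^2 + I3*x3^2) := by
    rw [hH1, hd, div_div_eq_mul_div, div_mul_eq_mul_div, mul_div_assoc,
      div_self hE, mul_one, mul_comm]
  have h2 : H2 * E = 4*I2*I3*(I1^2*x1^2 + I2^2*x2^2 + I3^2*x3^2) := by
    rw [hH2, hd, div_div_eq_mul_div, div_mul_eq_mul_div, mul_div_assoc,
      div_self hE, mul_one, mul_comm]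
  have k1 : A1 * E = (I2 - I3) * (I1*(4*I2*I3*(I1*x1^2 + I2*x2^2 + I3*x3^2))
      - 4*I2*I3*(I1^2*x1^2 + I2^2*x2^2 + I3^2*x3^2)) := by
    rw [hA1]; linear_combination ((I2 - I3)*I1) * h1 - (I2 - I3) * h2
  have k2 : A2 * E = (I3 - I1) * (I2*(4*I2*I3*(I1*x1^2 + I2*x2^2 + I3*x3^2))
      - 4*I2*I3*(I1^2*x1^2 + I2^2*x2^2 + I3^2*x3^2)) := by
    rw [hA2]; linear_combination ((I3 - I1)*I2) * h1 - (I3 - I1) * h2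
  have k3 : A3 * E = (I1 - I2) * (I3*(4*I2*I3*(I1*x1^2 + I2*x2^2 + I3*x3^2))
      - 4*I2*I3*(I1^2*x1^2 + I2^2*x2^2 + I3^2*x3^2)) := by
    rw [hA3]; linear_combination ((I1 - I2)*I3) * h1 - (I1 - I2) * h2
  have hR : (4*I2*I3)^2 * A0^2 *
      ((1 + ξ1 + ξ2 + ξ3)^2 - 4*(1 + ξ1*ξ2 + ξ2*ξ3 + ξ3*ξ1)) =
      (16*I1*I2^2*I3^2 + 4*I1*I2*I3*(I3 - I1)*(I1 - I2)*x1^2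
        + 4*I2^2*I3*(I1 - I2)*(I2 - I3)*x2^2
        + 4*I2*I3^2*(I2 - I3)*(I3 - I1)*x3^2)^2
      - 4*((16*I1*I2^2*I3^2)^2
        + 16*I1*I2^3*I3^2*(I3 - I1)*(I1 - I2)*x1^2*(I1 - I2)*(I2 - I3)*x2^2
        + 16*I2^3*I3^3*(I1 - I2)*(I2 - I3)*x2^2*(I2 - I3)*(I3 - I1)*x3^2
        + 16*I1*I2^2*I3^3*(I2 - I3)*(I3 - I1)*x3^2*(I3 - I1)*(I1 - I2)*x1^2) := by
    rw [hξ1, hξ2, hξ3, hA0]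
    field_simp
    ring
  have key : (A1^2 + 2*A0*(A2 - A3) - 3*A0^2) * E^2 =
      (4*I2*I3)^2 * A0^2 *
        ((1 + ξ1 + ξ2 + ξ3)^2 - 4*(1 + ξ1*ξ2 + ξ2*ξ3 + ξ3*ξ1)) := by
    rw [hR, hA0]
    linear_combination (A1*E + (I2 - I3) * (I1*(4*I2*I3*(I1*x1^2 + I2*x2^2 + I3*x3^2))
        - 4*I2*I3*(I1^2*x1^2 + I2^2*x2^2 + I3^2*x3^2))) * k1
      + (2*(4*I1*I2*I3)*E) * k2 - (2*(4*I1*I2*I3)*E) * k3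
  have hC : (4*I2*I3)^2 * A0^2 ≠ 0 := by
    rw [hA0]; positivity
  constructor
  · intro h
    have h0 : (4*I2*I3)^2 * A0^2 *
        ((1 + ξ1 + ξ2 + ξ3)^2 - 4*(1 + ξ1*ξ2 + ξ2*ξ3 + ξ3*ξ1)) = 0 := by
      rw [← key, h, zero_mul]
    exact (mul_eq_zero.mp h0).resolve_left hC
  · intro h
    have h0 : (A1^2 + 2*A0*(A2 - A3) - 3*A0^2) * E^2 = 0 := by
      rw [key, h, mul_zero]
    exact (mul_eq_zero.mp h0).resolve_right (pow_ne_zero 2 hE)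
end

section
/- If I1, I2, I3 are pairwise distinct positive reals, then the discrete Euler map (with real variables) has no periodic point of exact period 2: there is no real (x1,x2,x3) with well-defined image such that the second iterate equals (x1,x2,x3) but the map does not fix (x1,x2,x3). -/
/-- The denominator of the discrete Euler map. -/
noncomputable def eulerD (I1 I2 I3 : ℝ) (p : ℝ × ℝ × ℝ) : ℝ :=
  let a1 : ℝ := (I2 - I3) / (2 * I1)
  let a2 : ℝ := (I3 - I1) / (2 * I2)
  let a3 : ℝ := (I1 - I2) / (2 * I3)
  1 - 2*a1*a2*a3*p.1*p.2.1*p.2.2 - a2*a3*p.1^2 - a3*a1*p.2.1^2 - a1*a2*p.2.2^2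

/-- The explicit discrete Euler map. -/
noncomputable def eulerMap (I1 I2 I3 : ℝ) (p : ℝ × ℝ × ℝ) : ℝ × ℝ × ℝ :=
  let a1 : ℝ := (I2 - I3) / (2 * I1)
  let a2 : ℝ := (I3 - I1) / (2 * I2)
  let a3 : ℝ := (I1 - I2) / (2 * I3)
  let D : ℝ := eulerD I1 I2 I3 p
  ((p.1*(1 - a2*a3*p.1^2 + a3*a1*p.2.1^2 + a1*a2*p.2.2^2) + 2*a1*p.2.1*p.2.2) / D,
   (p.2.1*(1 + a2*a3*p.1^2 - a3*a1*p.2.1^2 + a1*a2*p.2.2^2) + 2*a2*p.2.2*p.1) / D,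
   (p.2.2*(1 + a2*a3*p.1^2 + a3*a1*p.2.1^2 - a1*a2*p.2.2^2) + 2*a3*p.1*p.2.1) / D)

/-!
The discrete Euler map is Kahan's discretization of the Euler top: its image `X` of `x` solves
`X - x = B(x, X)` with `B(x, X)_i = α_i (X_j x_k + x_j X_k)` symmetric in `x` and `X`.
For a 2-cycle `x ↦ X ↦ x` the same relation read at `X` gives `x - X = B(X, x) = B(x, X) = X - x`,
so `X = x` and the point is fixed.
-/

theorem eq_of_sub_eq_of_sub_eq_of_comm {M : Type*} [AddCommGroup M] [IsAddTorsionFree M]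
    {b : M → M → M} (hb : ∀ x y, b x y = b y x) {x y : M}
    (hxy : y - x = b x y) (hyx : x - y = b y x) : y = x := by
  have h : (2 : ℕ) • (y - x) = 0 := by
    rw [two_nsmul]
    nth_rewrite 2 [hxy]
    rw [hb, ← hyx, sub_add_sub_cancel', sub_self]
  exact sub_eq_zero.mp ((nsmul_eq_zero_iff_right two_ne_zero).mp h)

noncomputable def eulerKahanTerm (I1 I2 I3 : ℝ) (p q : ℝ × ℝ × ℝ) : ℝ × ℝ × ℝ :=
  ((I2 - I3) / (2 * I1) * (q.2.1 * p.2.2 + p.2.1 * q.2.2),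
   (I3 - I1) / (2 * I2) * (q.2.2 * p.1 + p.2.2 * q.1),
   (I1 - I2) / (2 * I3) * (q.1 * p.2.1 + p.1 * q.2.1))

theorem eulerKahanTerm_comm (I1 I2 I3 : ℝ) (p q : ℝ × ℝ × ℝ) :
    eulerKahanTerm I1 I2 I3 p q = eulerKahanTerm I1 I2 I3 q p := by
  simp only [eulerKahanTerm]
  ext <;> ring

theorem eulerMap_sub_self (I1 I2 I3 : ℝ) {p : ℝ × ℝ × ℝ} (hD : eulerD I1 I2 I3 p ≠ 0) :
    eulerMap I1 I2 I3 p - p = eulerKahanTerm I1 I2 I3 p (eulerMap I1 I2 I3 p) := by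
  obtain ⟨x1, x2, x3⟩ := p
  simp only [eulerMap, eulerD, eulerKahanTerm] at *
  set a1 : ℝ := (I2 - I3) / (2 * I1)
  set a2 : ℝ := (I3 - I1) / (2 * I2)
  set a3 : ℝ := (I1 - I2) / (2 * I3)
  set D : ℝ := 1 - 2*a1*a2*a3*x1*x2*x3 - a2*a3*x1^2 - a3*a1*x2^2 - a1*a2*x3^2 with hD_def
  ext <;> simp only [Prod.fst_sub, Prod.snd_sub] <;> field_simp <;> rw [hD_def] <;> ring

theorem euler_top_no_period_two_general
    (I1 I2 I3 : ℝ) :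
    ¬ ∃ p : ℝ × ℝ × ℝ,
        eulerD I1 I2 I3 p ≠ 0 ∧
        eulerD I1 I2 I3 (eulerMap I1 I2 I3 p) ≠ 0 ∧
        eulerMap I1 I2 I3 (eulerMap I1 I2 I3 p) = p ∧
        eulerMap I1 I2 I3 p ≠ p := by
  rintro ⟨p, hD, hD', hcycle, hnotfixed⟩
  have hback := eulerMap_sub_self I1 I2 I3 hD'
  rw [hcycle] at hback
  exact hnotfixed (eq_of_sub_eq_of_sub_eq_of_comm (eulerKahanTerm_comm I1 I2 I3)
    (eulerMap_sub_self I1 I2 I3 hD) hback)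

/-- for pairwise distinct positive moments of inertia, the real
discrete Euler map has no periodic point of exact period 2. -/
theorem euler_top_no_period_two
    (I1 I2 I3 : ℝ)
    (hI1 : 0 < I1) (hI2 : 0 < I2) (hI3 : 0 < I3)
    (h12 : I1 ≠ I2) (h23 : I2 ≠ I3) (h31 : I3 ≠ I1) :
    ¬ ∃ p : ℝ × ℝ × ℝ,
        eulerD I1 I2 I3 p ≠ 0 ∧
        eulerD I1 I2 I3 (eulerMap I1 I2 I3 p) ≠ 0 ∧
        eulerMap I1 I2 I3 (eulerMap I1 I2 I3 p) = p ∧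
        eulerMap I1 I2 I3 p ≠ p :=
  euler_top_no_period_two_general I1 I2 I3
end

section
/- For the biquadratic relation S(X,x) = aX²x² + bXx(X+x) + c(X-x)² + dXx + e(X+x) + f = 0, composing the correspondence with itself yields a biquadratic relation between X⁽²⁾ and x whose coefficient c⁽²⁾ equals (af - c²)² - (ae - bc)(bf - ce). In particular, if x, X, X⁽²⁾ satisfy S(X,x) = 0, S(X⁽²⁾,X) = 0 and X⁽²⁾ ≠ x is the second branch, then a⁽²⁾(X⁽²⁾)²x² + b⁽²⁾X⁽²⁾x(X⁽²⁾+x) + c⁽²⁾(X⁽²⁾-x)² + d⁽²⁾X⁽²⁾x + e⁽²⁾(X⁽²⁾+x) + f⁽²⁾ = 0, with coefficients a⁽²⁾ = (ae-cb)² - (ad-2ac-b²)(be-cd+2c²), b⁽²⁾ = (ae-cb)(2af-be+cd-4c²) - (ad-2ac-b²)(bf-ce), c⁽²⁾ = (af-c²)² - (ae-bc)(bf-ce), d⁽²⁾ = 4(af-c²)² - 2(ae-bc)(bf-ce) - (be-cd+2c²)² - (ad-2ac-b²)(df-2cf-e²), e⁽²⁾ = (fb-ce)(2af-be+cd-4c²)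 - (fd-2fc-e²)(ea-cb), f⁽²⁾ = (fb-ce)² - (fd-2fc-e²)(be-cd+2c²). -/
/-- The symmetric biquadratic `S(X,x)`. -/
def biquadratic (a b c d e f X x : ℂ) : ℂ :=
  a*X^2*x^2 + b*X*x*(X + x) + c*(X - x)^2 + d*X*x + e*(X + x) + f

/-- composing the biquadratic correspondence with itself gives a
biquadratic relation between `X⁽²⁾` and `x` with the stated coefficients. -/
theorem biquadratic_composition
    (a b c d e f x X X2 : ℂ)
    (hS1 : biquadratic a b c d e f X x = 0)
    (hS2 : biquadratic a b c d e f X2 X = 0)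
    (hne : X2 ≠ x) :
    ((a*e - c*b)^2 - (a*d - 2*a*c - b^2)*(b*e - c*d + 2*c^2)) * X2^2 * x^2
    + ((a*e - c*b)*(2*a*f - b*e + c*d - 4*c^2)
        - (a*d - 2*a*c - b^2)*(b*f - c*e)) * X2 * x * (X2 + x)
    + ((a*f - c^2)^2 - (a*e - b*c)*(b*f - c*e)) * (X2 - x)^2
    + (4*(a*f - c^2)^2 - 2*(a*e - b*c)*(b*f - c*e) - (b*e - c*d + 2*c^2)^2
        - (a*d - 2*a*c - b^2)*(d*f - 2*c*f - e^2)) * X2 * x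
    + ((f*b - c*e)*(2*a*f - b*e + c*d - 4*c^2)
        - (f*d - 2*f*c - e^2)*(e*a - c*b)) * (X2 + x)
    + ((f*b - c*e)^2 - (f*d - 2*f*c - e^2)*(b*e - c*d + 2*c^2)) = 0 := by
  unfold biquadratic at hS1 hS2
  have hB0 : ((a*X2^2 + b*X2 + c)*(c*x^2 + e*x + f)
      - (a*x^2 + b*x + c)*(c*X2^2 + e*X2 + f))
      + ((a*X2^2 + b*X2 + c)*(b*x^2 + (d - 2*c)*x + e)
      - (a*x^2 + b*x + c)*(b*X2^2 + (d - 2*c)*X2 + e))*X = 0 := by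
    linear_combination (a*X2^2 + b*X2 + c) * hS1 - (a*x^2 + b*x + c) * hS2
  have hE0 : ((b*x^2 + (d - 2*c)*x + e)*(c*X2^2 + e*X2 + f)
      - (b*X2^2 + (d - 2*c)*X2 + e)*(c*x^2 + e*x + f))
      + ((a*X2^2 + b*X2 + c)*(b*x^2 + (d - 2*c)*x + e)
      - (a*x^2 + b*x + c)*(b*X2^2 + (d - 2*c)*X2 + e))*X^2 = 0 := by
    linear_combination (b*x^2 + (d - 2*c)*x + e) * hS2
      - (b*X2^2 + (d - 2*c)*X2 + e) * hS1
  have key : (X2 - x)^2 *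
      (((a*e - c*b)^2 - (a*d - 2*a*c - b^2)*(b*e - c*d + 2*c^2)) * X2^2 * x^2
      + ((a*e - c*b)*(2*a*f - b*e + c*d - 4*c^2)
          - (a*d - 2*a*c - b^2)*(b*f - c*e)) * X2 * x * (X2 + x)
      + ((a*f - c^2)^2 - (a*e - b*c)*(b*f - c*e)) * (X2 - x)^2
      + (4*(a*f - c^2)^2 - 2*(a*e - b*c)*(b*f - c*e) - (b*e - c*d + 2*c^2)^2
          - (a*d - 2*a*c - b^2)*(d*f - 2*c*f - e^2)) * X2 * x
      + ((f*b - c*e)*(2*a*f - b*e + c*d - 4*c^2)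
          - (f*d - 2*f*c - e^2)*(e*a - c*b)) * (X2 + x)
      + ((f*b - c*e)^2 - (f*d - 2*f*c - e^2)*(b*e - c*d + 2*c^2))) = 0 := by
    linear_combination
      ((a*X2^2 + b*X2 + c)*(c*x^2 + e*x + f)
        - (a*x^2 + b*x + c)*(c*X2^2 + e*X2 + f)
        - ((a*X2^2 + b*X2 + c)*(b*x^2 + (d - 2*c)*x + e)
          - (a*x^2 + b*x + c)*(b*X2^2 + (d - 2*c)*X2 + e))*X) * hB0
      + ((a*X2^2 + b*X2 + c)*(b*x^2 + (d - 2*c)*x + e)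
          - (a*x^2 + b*x + c)*(b*X2^2 + (d - 2*c)*X2 + e)) * hE0
  have hne2 : (X2 - x)^2 ≠ 0 := pow_ne_zero 2 (sub_ne_zero.mpr hne)
  exact (mul_eq_zero.mp key).resolve_left hne2
end
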